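/- (Linear size of the compressed quadtree.) For every finite set P ⊆ U with |P| = n ≥ 1, the number of canonical squares that are critical for P is at most n − 1, and the total number of tiles of QT(P) is at most 4n. -/

import Mathlib

/-- The unit square `U = [0,1) × [0,1)`. -/
def unitSq : Set (ℝ × ℝ) := Set.Ico (0 : ℝ) 1 ×ˢ Set.Ico (0 : ℝ) 1

/-- The square `[i/2^k, (i+1)/2^k) × [j/2^k, (j+1)/2^k)`. -/
def canSq (k : ℕ) (i j : ℤ) : Set (ℝ × ℝ) :=
  Set.Ico ((i : ℝ) / 2 ^ k) (((i : ℝ) + 1) / 2 ^ k) ×ˢ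
    Set.Ico ((j : ℝ) / 2 ^ k) (((j : ℝ) + 1) / 2 ^ k)

/-- `σ` is a canonical square of side length `2⁻ᵏ`: it has the form
`[i/2^k, (i+1)/2^k) × [j/2^k, (j+1)/2^k)` with `0 ≤ i, j < 2^k`
(so it is contained in the unit square). -/
def IsCanSqSide (k : ℕ) (σ : Set (ℝ × ℝ)) : Prop :=
  ∃ i j : ℤ, 0 ≤ i ∧ i < 2 ^ k ∧ 0 ≤ j ∧ j < 2 ^ k ∧ σ = canSq k i j

/-- `σ` is a canonical square. -/
def IsCanSq (σ : Set (ℝ × ℝ)) : Prop := ∃ k : ℕ, IsCanSqSide k σ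

/-- `q` is one of the four quadrants of the canonical square `σ`: if `σ` has side
length `2⁻ᵏ`, the quadrants are the canonical squares of side length `2⁻⁽ᵏ⁺¹⁾`
contained in `σ`. -/
def IsQuadrantOf (q σ : Set (ℝ × ℝ)) : Prop :=
  ∃ k : ℕ, IsCanSqSide k σ ∧ IsCanSqSide (k + 1) q ∧ q ⊆ σ

/-- `σ` is the smallest canonical square containing `S`: it is a canonical square,
it contains `S`, and it is contained in every canonical square containing `S`. -/
def IsSmallestCanSq (S σ : Set (ℝ × ℝ)) : Prop :=
  IsCanSq σ ∧ S ⊆ σ ∧ ∀ τ : Set (ℝ × ℝ), IsCanSq τ → S ⊆ τ → σ ⊆ τ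

open scoped Classical

/-- `smallestCanSq S`: the smallest canonical square containing `S` (junk value `∅` if none exists). -/
noncomputable def smallestCanSq (S : Set (ℝ × ℝ)) : Set (ℝ × ℝ) :=
  if h : ∃ σ : Set (ℝ × ℝ), IsSmallestCanSq S σ then h.choose else ∅

/-- A canonical square `σ` is critical for `P` if at least two of its four
quadrants contain a point of `P`. -/
def Critical (P σ : Set (ℝ × ℝ)) : Prop :=
  IsCanSq σ ∧ ∃ q₁ q₂ : Set (ℝ × ℝ), IsQuadrantOf q₁ σ ∧ IsQuadrantOf q₂ σ ∧
    q₁ ≠ q₂ ∧ (P ∩ q₁).Nonempty ∧ (P ∩ q₂).Nonempty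

/-- The tiles of the compressed quadtree map `QT(P)`: (i) `U` itself if `|P| ≤ 1`;
(ii) the annulus `U \ sq(P)` if `|P| ≥ 2` and `sq(P) ≠ U`; (iii) for every
canonical square `σ` critical for `P` and every quadrant `q` of `σ`: the square
`q` if `|P ∩ q| ≤ 1`, and the annulus `q \ sq(P ∩ q)` if `|P ∩ q| ≥ 2` and
`sq(P ∩ q) ≠ q`. -/
noncomputable def QT (P : Set (ℝ × ℝ)) : Set (Set (ℝ × ℝ)) :=
  {f | (P.ncard ≤ 1 ∧ f = unitSq)
    ∨ (2 ≤ P.ncard ∧ smallestCanSq P ≠ unitSq ∧ f = unitSq \ smallestCanSq P)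
    ∨ (∃ σ q : Set (ℝ × ℝ), Critical P σ ∧ IsQuadrantOf q σ ∧
        (((P ∩ q).ncard ≤ 1 ∧ f = q)
          ∨ (2 ≤ (P ∩ q).ncard ∧ smallestCanSq (P ∩ q) ≠ q ∧ f = q \ smallestCanSq (P ∩ q))))}

/-! Charge each critical square `σ` to a point of `P`: the lexicographically largest point of
`P ∩ σ` outside the quadrant of `σ` that holds the lexicographically largest point of `P ∩ σ`.
Canonical squares sharing a point are nested, and a critical square strictly inside a critical
square `τ` lies in a single quadrant of `τ`; this makes the charging injective. It never hits the
largest point of `P`, so there are at most `n - 1` critical squares. Apart from `U` and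
`U \ sq(P)`, every tile comes from one of the four quadrants of a critical square, so there are at
most `2 + 4 (n - 1) ≤ 4 n` tiles. -/

open Set

lemma mem_Ico_div_two_pow_iff {x : ℝ} {k : ℕ} {i : ℤ} :
    x ∈ Ico ((i : ℝ) / 2 ^ k) (((i : ℝ) + 1) / 2 ^ k) ↔ ⌊x * 2 ^ k⌋ = i := by
  rw [Int.floor_eq_iff, mem_Ico, div_le_iff₀ (by positivity), lt_div_iff₀ (by positivity)]

lemma floor_mul_two_pow_of_le (x : ℝ) {l k : ℕ} (h : l ≤ k) :
    ⌊x * 2 ^ l⌋ = ⌊x * 2 ^ k⌋ / 2 ^ (k - l) := by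
  have hx : x * 2 ^ l = x * 2 ^ k / ((2 ^ (k - l) : ℕ) : ℝ) := by
    push_cast
    rw [eq_div_iff (by positivity), mul_assoc, ← pow_add, Nat.add_sub_cancel' h]
  rw [hx, Int.floor_div_natCast]
  push_cast
  rfl

lemma mem_canSq_iff {k : ℕ} {i j : ℤ} {p : ℝ × ℝ} :
    p ∈ canSq k i j ↔ ⌊p.1 * 2 ^ k⌋ = i ∧ ⌊p.2 * 2 ^ k⌋ = j := by
  simp only [canSq, mem_prod, mem_Ico_div_two_pow_iff]

lemma canSq_nonempty (k : ℕ) (i j : ℤ) : (canSq k i j).Nonempty := by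
  refine ⟨((i : ℝ) / 2 ^ k, (j : ℝ) / 2 ^ k), mem_canSq_iff.2 ?_⟩
  simp only [div_mul_cancel₀ _ (pow_ne_zero k (two_ne_zero' ℝ)), Int.floor_intCast, and_self]

lemma level_eq_of_canSq_eq {k l : ℕ} {i j a b : ℤ} (h : canSq k i j = canSq l a b) :
    k = l := by
  rw [canSq, canSq, prod_eq_prod_iff_of_nonempty (canSq_nonempty k i j)] at h
  obtain ⟨hlo, hhi⟩ := (Ico_eq_Ico_iff (Or.inl (by gcongr; linarith))).1 h.1
  have hpow : ((2 : ℝ) ^ k)⁻¹ = ((2 : ℝ) ^ l)⁻¹ := by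
    simp only [add_div, hlo, one_div] at hhi
    linarith
  exact pow_right_injective₀ two_pos (by norm_num) (inv_injective hpow)

noncomputable def dyadicCell (k : ℕ) (p : ℝ × ℝ) : Set (ℝ × ℝ) :=
  canSq k ⌊p.1 * 2 ^ k⌋ ⌊p.2 * 2 ^ k⌋

lemma mem_dyadicCell (k : ℕ) (p : ℝ × ℝ) : p ∈ dyadicCell k p :=
  mem_canSq_iff.2 ⟨rfl, rfl⟩

lemma canSq_eq_dyadicCell {k : ℕ} {i j : ℤ} {p : ℝ × ℝ} (hp : p ∈ canSq k i j) :
    canSq k i j = dyadicCell k p := by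
  obtain ⟨rfl, rfl⟩ := mem_canSq_iff.1 hp
  rfl

lemma dyadicCell_subset_of_le {l k : ℕ} (h : l ≤ k) (p : ℝ × ℝ) :
    dyadicCell k p ⊆ dyadicCell l p := by
  intro r hr
  obtain ⟨h1, h2⟩ := mem_canSq_iff.1 hr
  refine mem_canSq_iff.2 ⟨?_, ?_⟩
  · rw [floor_mul_two_pow_of_le _ h, floor_mul_two_pow_of_le p.1 h, h1]
  · rw [floor_mul_two_pow_of_le _ h, floor_mul_two_pow_of_le p.2 h, h2]

lemma floor_mul_two_pow_succ_div_two (x : ℝ) (k : ℕ) :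
    ⌊x * 2 ^ (k + 1)⌋ / 2 = ⌊x * 2 ^ k⌋ := by
  rw [floor_mul_two_pow_of_le x (Nat.le_add_right k 1), Nat.add_sub_cancel_left, pow_one]

namespace IsCanSqSide

variable {k l : ℕ} {σ : Set (ℝ × ℝ)} {p : ℝ × ℝ}

lemma nonempty (hσ : IsCanSqSide k σ) : σ.Nonempty := by
  obtain ⟨i, j, -, -, -, -, rfl⟩ := hσ
  exact canSq_nonempty k i j

lemma eq_dyadicCell (hσ : IsCanSqSide k σ) (hp : p ∈ σ) : σ = dyadicCell k p := by
  obtain ⟨i, j, -, -, -, -, rfl⟩ := hσ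
  exact canSq_eq_dyadicCell hp

lemma level_unique (hk : IsCanSqSide k σ) (hl : IsCanSqSide l σ) : k = l := by
  obtain ⟨i, j, -, -, -, -, rfl⟩ := hk
  obtain ⟨a, b, -, -, -, -, h⟩ := hl
  exact level_eq_of_canSq_eq h

lemma dyadicCell_succ (hσ : IsCanSqSide k σ) (hp : p ∈ σ) :
    IsCanSqSide (k + 1) (dyadicCell (k + 1) p) := by
  obtain ⟨i, j, hi, hik, hj, hjk, rfl⟩ := hσ
  obtain ⟨rfl, rfl⟩ := mem_canSq_iff.1 hp
  have h1 := floor_mul_two_pow_succ_div_two p.1 k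
  have h2 := floor_mul_two_pow_succ_div_two p.2 k
  have hpow : (2 : ℤ) ^ (k + 1) = 2 * 2 ^ k := by ring
  exact ⟨_, _, by omega, by omega, by omega, by omega, rfl⟩

end IsCanSqSide

section

variable {k : ℕ} {σ σ' τ q q₁ q₂ : Set (ℝ × ℝ)} {p : ℝ × ℝ}

lemma IsQuadrantOf.subset (hq : IsQuadrantOf q σ) : q ⊆ σ := by
  obtain ⟨k, -, -, hsub⟩ := hq
  exact hsub

lemma IsQuadrantOf.nonempty (hq : IsQuadrantOf q σ) : q.Nonempty := by
  obtain ⟨k, -, hq, -⟩ := hq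
  exact hq.nonempty

lemma isQuadrantOf_dyadicCell (hσ : IsCanSqSide k σ) (hp : p ∈ σ) :
    IsQuadrantOf (dyadicCell (k + 1) p) σ :=
  ⟨k, hσ, hσ.dyadicCell_succ hp, hσ.eq_dyadicCell hp ▸ dyadicCell_subset_of_le k.le_succ p⟩

lemma IsQuadrantOf.eq_dyadicCell (hq : IsQuadrantOf q σ) (hσ : IsCanSqSide k σ) (hp : p ∈ q) :
    q = dyadicCell (k + 1) p := by
  obtain ⟨l, hl, hq, -⟩ := hq
  obtain rfl := hl.level_unique hσ
  exact hq.eq_dyadicCell hp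

lemma IsQuadrantOf.eq_of_mem_of_mem (h₁ : IsQuadrantOf q₁ σ) (h₂ : IsQuadrantOf q₂ σ)
    (hp₁ : p ∈ q₁) (hp₂ : p ∈ q₂) : q₁ = q₂ := by
  obtain ⟨k, hσ, -⟩ := id h₁
  rw [h₁.eq_dyadicCell hσ hp₁, h₂.eq_dyadicCell hσ hp₂]

namespace IsCanSq

lemma exists_isQuadrantOf_mem (hσ : IsCanSq σ) (hp : p ∈ σ) : ∃ q, IsQuadrantOf q σ ∧ p ∈ q := by
  obtain ⟨k, hσ⟩ := hσ
  exact ⟨_, isQuadrantOf_dyadicCell hσ hp, mem_dyadicCell _ p⟩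

lemma subset_or_subset_of_mem (hσ : IsCanSq σ) (hτ : IsCanSq τ) (hpσ : p ∈ σ) (hpτ : p ∈ τ) :
    σ ⊆ τ ∨ τ ⊆ σ := by
  obtain ⟨k, hσ⟩ := hσ
  obtain ⟨l, hτ⟩ := hτ
  rw [hσ.eq_dyadicCell hpσ, hτ.eq_dyadicCell hpτ]
  rcases le_total l k with h | h
  · exact Or.inl (dyadicCell_subset_of_le h p)
  · exact Or.inr (dyadicCell_subset_of_le h p)

lemma exists_isQuadrantOf_superset (hσ' : IsCanSq σ') (hσ : IsCanSq σ) (hsub : σ' ⊆ σ)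
    (hne : σ' ≠ σ) : ∃ q, IsQuadrantOf q σ ∧ σ' ⊆ q := by
  obtain ⟨k', hσ'⟩ := hσ'
  obtain ⟨k, hσ⟩ := hσ
  obtain ⟨c, hc⟩ := hσ'.nonempty
  have hcσ := hsub hc
  rw [hσ'.eq_dyadicCell hc, hσ.eq_dyadicCell hcσ] at hsub hne
  have hlt : k < k' := lt_of_not_ge fun hle => hne (hsub.antisymm (dyadicCell_subset_of_le hle c))
  exact ⟨_, isQuadrantOf_dyadicCell hσ hcσ, hσ'.eq_dyadicCell hc ▸ dyadicCell_subset_of_le hlt c⟩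

lemma finite_setOf_isQuadrantOf_and_ncard_le (hσ : IsCanSq σ) :
    {q | IsQuadrantOf q σ}.Finite ∧ {q | IsQuadrantOf q σ}.ncard ≤ 4 := by
  obtain ⟨k, hσ⟩ := hσ
  obtain ⟨i, j, -, -, -, -, rfl⟩ := id hσ
  set s : Finset (ℤ × ℤ) := {2 * i, 2 * i + 1} ×ˢ {2 * j, 2 * j + 1}
  have hsub : {q | IsQuadrantOf q (canSq k i j)} ⊆
      ↑(s.image fun ab : ℤ × ℤ => canSq (k + 1) ab.1 ab.2) := by
    intro q hq
    obtain ⟨p, hp⟩ := IsQuadrantOf.nonempty hq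
    obtain ⟨rfl, rfl⟩ := mem_canSq_iff.1 (IsQuadrantOf.subset hq hp)
    have ha := floor_mul_two_pow_succ_div_two p.1 k
    have hb := floor_mul_two_pow_succ_div_two p.2 k
    rw [Finset.coe_image]
    refine ⟨(⌊p.1 * 2 ^ (k + 1)⌋, ⌊p.2 * 2 ^ (k + 1)⌋), ?_,
      (IsQuadrantOf.eq_dyadicCell hq hσ hp).symm⟩
    simp only [s, Finset.mem_coe, Finset.mem_product, Finset.mem_insert, Finset.mem_singleton]
    omega
  refine ⟨(Finset.finite_toSet _).subset hsub, ?_⟩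
  calc {q | IsQuadrantOf q (canSq k i j)}.ncard
        ≤ (s.image fun ab : ℤ × ℤ => canSq (k + 1) ab.1 ab.2).card :=
          (ncard_le_ncard hsub (Finset.finite_toSet _)).trans_eq (ncard_coe_finset _)
      _ ≤ s.card := Finset.card_image_le
      _ ≤ 2 * 2 := by
          rw [Finset.card_product]
          exact Nat.mul_le_mul Finset.card_le_two Finset.card_le_two

end IsCanSq

noncomputable def lexMax (S : Set (ℝ × ℝ)) : ℝ × ℝ :=
  if h : ∃ m ∈ S, ∀ x ∈ S, toLex x ≤ toLex m then h.choose else 0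

section lexMax

variable {S : Set (ℝ × ℝ)}

lemma lexMax_mem (hS : S.Finite) (hne : S.Nonempty) : lexMax S ∈ S := by
  have h := S.exists_max_image toLex hS hne
  rw [lexMax, dif_pos h]
  exact h.choose_spec.1

lemma toLex_le_lexMax (hS : S.Finite) {x : ℝ × ℝ} (hx : x ∈ S) : toLex x ≤ toLex (lexMax S) := by
  have h := S.exists_max_image toLex hS ⟨x, hx⟩
  rw [lexMax, dif_pos h]
  exact h.choose_spec.2 x hx

end lexMax

noncomputable def quadrantOf (σ : Set (ℝ × ℝ)) (p : ℝ × ℝ) : Set (ℝ × ℝ) :=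
  if h : ∃ q, IsQuadrantOf q σ ∧ p ∈ q then h.choose else ∅

lemma IsCanSq.quadrantOf_spec (hσ : IsCanSq σ) (hp : p ∈ σ) :
    IsQuadrantOf (quadrantOf σ p) σ ∧ p ∈ quadrantOf σ p := by
  rw [quadrantOf, dif_pos (hσ.exists_isQuadrantOf_mem hp)]
  exact (hσ.exists_isQuadrantOf_mem hp).choose_spec

noncomputable def topQuadrant (P σ : Set (ℝ × ℝ)) : Set (ℝ × ℝ) :=
  quadrantOf σ (lexMax (P ∩ σ))

noncomputable def charge (P σ : Set (ℝ × ℝ)) : ℝ × ℝ :=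
  lexMax ((P ∩ σ) \ topQuadrant P σ)

namespace Critical

variable {P : Set (ℝ × ℝ)} (hP : P.Finite)
include hP

lemma lexMax_mem (hσ : Critical P σ) : lexMax (P ∩ σ) ∈ P ∩ σ := by
  obtain ⟨-, q, -, hq, -, -, ⟨x, hxP, hxq⟩, -⟩ := hσ
  exact _root_.lexMax_mem (hP.inter_of_left σ) ⟨x, hxP, hq.subset hxq⟩

lemma topQuadrant_spec (hσ : Critical P σ) :
    IsQuadrantOf (topQuadrant P σ) σ ∧ lexMax (P ∩ σ) ∈ topQuadrant P σ :=
  hσ.1.quadrantOf_spec (hσ.lexMax_mem hP).2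

lemma charge_mem (hσ : Critical P σ) : charge P σ ∈ (P ∩ σ) \ topQuadrant P σ := by
  obtain ⟨hQ, -⟩ := hσ.topQuadrant_spec hP
  obtain ⟨-, q₁, q₂, hq₁, hq₂, hne, ⟨x₁, hx₁P, hx₁⟩, ⟨x₂, hx₂P, hx₂⟩⟩ := hσ
  refine _root_.lexMax_mem (hP.inter_of_left σ |>.sdiff) ?_
  by_cases h₁ : x₁ ∈ topQuadrant P σ
  · refine ⟨x₂, ⟨hx₂P, hq₂.subset hx₂⟩, fun h₂ => hne ?_⟩
    rw [hq₁.eq_of_mem_of_mem hQ hx₁ h₁, hQ.eq_of_mem_of_mem hq₂ h₂ hx₂]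
  · exact ⟨x₁, ⟨hx₁P, hq₁.subset hx₁⟩, h₁⟩

lemma toLex_charge_lt (hσ : Critical P σ) :
    toLex (charge P σ) < toLex (lexMax (P ∩ σ)) := by
  obtain ⟨hc, hcQ⟩ := hσ.charge_mem hP
  refine (toLex_le_lexMax (hP.inter_of_left σ) hc).lt_of_ne fun h => hcQ ?_
  rw [toLex.injective h]
  exact (hσ.topQuadrant_spec hP).2

lemma charge_ne_lexMax (hσ : Critical P σ) : charge P σ ≠ lexMax P := fun h =>
  (hσ.toLex_charge_lt hP).not_ge (h ▸ toLex_le_lexMax hP (hσ.lexMax_mem hP).1)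

lemma charge_ne_of_subset_of_ne (hσ : Critical P σ) (hτ : Critical P τ) (hsub : σ ⊆ τ)
    (hne : σ ≠ τ) : charge P σ ≠ charge P τ := by
  intro heq
  obtain ⟨q, hq, hσq⟩ := hσ.1.exists_isQuadrantOf_superset hτ.1 hsub hne
  obtain ⟨hcτ, hcτQ⟩ := hτ.charge_mem hP
  obtain ⟨hQ, -⟩ := hτ.topQuadrant_spec hP
  by_cases hqQ : q = topQuadrant P τ
  · exact hcτQ (hqQ ▸ hσq (heq ▸ (hσ.charge_mem hP).1.2))
  · -- the top point of `σ` then competes for `charge P τ`, yet it exceeds `charge P σ`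
    have hm := hσ.lexMax_mem hP
    have hmτ : lexMax (P ∩ σ) ∈ (P ∩ τ) \ topQuadrant P τ :=
      ⟨⟨hm.1, hsub hm.2⟩, fun h => hqQ (hq.eq_of_mem_of_mem hQ (hσq hm.2) h)⟩
    exact (hσ.toLex_charge_lt hP).not_ge
      (heq ▸ toLex_le_lexMax (hP.inter_of_left τ |>.sdiff) hmτ)

end Critical

lemma charge_injOn {P : Set (ℝ × ℝ)} (hP : P.Finite) :
    InjOn (charge P) {σ | Critical P σ} := by
  intro σ hσ τ hτ heq
  by_contra hne
  have hcσ := (hσ.charge_mem hP).1.2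
  have hcτ := (hτ.charge_mem hP).1.2
  rw [← heq] at hcτ
  rcases hσ.1.subset_or_subset_of_mem hτ.1 hcσ hcτ with h | h
  · exact hσ.charge_ne_of_subset_of_ne hP hτ h hne heq
  · exact hτ.charge_ne_of_subset_of_ne hP hσ h (Ne.symm hne) heq.symm

lemma charge_mapsTo {P : Set (ℝ × ℝ)} (hP : P.Finite) :
    MapsTo (charge P) {σ | Critical P σ} (P \ {lexMax P}) := fun _ hσ =>
  ⟨(hσ.charge_mem hP).1.1, hσ.charge_ne_lexMax hP⟩

lemma finite_setOf_critical {P : Set (ℝ × ℝ)} (hP : P.Finite) : {σ | Critical P σ}.Finite :=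
  hP.sdiff.of_injOn (charge_mapsTo hP) (charge_injOn hP)

lemma ncard_setOf_critical_le {P : Set (ℝ × ℝ)} (hP : P.Finite) :
    {σ | Critical P σ}.ncard ≤ P.ncard - 1 := by
  rcases P.eq_empty_or_nonempty with rfl | hne
  · simp [Critical]
  calc {σ | Critical P σ}.ncard ≤ (P \ {lexMax P}).ncard :=
        ncard_le_ncard_of_injOn _ (charge_mapsTo hP) (charge_injOn hP) hP.sdiff
    _ = P.ncard - 1 := ncard_sdiff_singleton_of_mem (_root_.lexMax_mem hP hne)

end

lemma ncard_biUnion_le_mul {ι α : Type*} {t : Set ι} (ht : t.Finite) {s : ι → Set α} {m : ℕ}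
    (hs : ∀ i ∈ t, (s i).ncard ≤ m) : (⋃ i ∈ t, s i).ncard ≤ m * t.ncard := by
  have h := ht.toFinset.set_ncard_biUnion_le s
  simp only [Finite.mem_toFinset] at h
  rw [ncard_eq_toFinset_card t ht, mul_comm]
  exact h.trans (Finset.sum_le_card_nsmul _ _ _ (by simpa using hs))

noncomputable def quadrantTile (P q : Set (ℝ × ℝ)) : Set (ℝ × ℝ) :=
  if (P ∩ q).ncard ≤ 1 then q else q \ smallestCanSq (P ∩ q)

lemma QT_subset (P : Set (ℝ × ℝ)) :
    QT P ⊆ {unitSq, unitSq \ smallestCanSq P} ∪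
      ⋃ σ ∈ {σ | Critical P σ}, quadrantTile P '' {q | IsQuadrantOf q σ} := by
  rintro f (⟨-, rfl⟩ | ⟨-, -, rfl⟩ | ⟨σ, q, hσ, hq, hf⟩)
  · exact Or.inl (Or.inl rfl)
  · exact Or.inl (Or.inr rfl)
  · refine Or.inr (mem_biUnion hσ ⟨q, hq, ?_⟩)
    rcases hf with ⟨h, rfl⟩ | ⟨h, -, rfl⟩
    · rw [quadrantTile, if_pos h]
    · rw [quadrantTile, if_neg (by omega)]

lemma ncard_QT_le {P : Set (ℝ × ℝ)} (hP : P.Finite) :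
    (QT P).ncard ≤ 2 + 4 * {σ | Critical P σ}.ncard := by
  have hC := finite_setOf_critical hP
  have hquad (σ) (hσ : Critical P σ) := hσ.1.finite_setOf_isQuadrantOf_and_ncard_le
  calc (QT P).ncard
      ≤ ({unitSq, unitSq \ smallestCanSq P} ∪
          ⋃ σ ∈ {σ | Critical P σ}, quadrantTile P '' {q | IsQuadrantOf q σ}).ncard :=
        ncard_le_ncard (QT_subset P) ((toFinite _).union
          (hC.biUnion fun σ hσ => (hquad σ hσ).1.image _))
    _ ≤ 2 + 4 * {σ | Critical P σ}.ncard := by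
        refine (ncard_union_le _ _).trans (add_le_add ?_ ?_)
        · exact (ncard_insert_le _ _).trans_eq (by rw [ncard_singleton])
        · exact ncard_biUnion_le_mul hC fun σ hσ =>
            (ncard_image_le (hquad σ hσ).1).trans (hquad σ hσ).2

theorem QT_linear_size_general (P : Set (ℝ × ℝ)) (hfin : P.Finite)
    (n : ℕ) (hn : P.ncard = n) (hn1 : 1 ≤ n) :
    {σ : Set (ℝ × ℝ) | Critical P σ}.ncard ≤ n - 1 ∧ (QT P).ncard ≤ 4 * n := by
  have hcrit := ncard_setOf_critical_le hfin
  have htiles := ncard_QT_le hfin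
  omega

/-- Linear size of the compressed quadtree: for `|P| = n ≥ 1`, the number of
canonical squares critical for `P` is at most `n - 1`, and the number of tiles
of `QT(P)` is at most `4n`. -/
theorem QT_linear_size (P : Set (ℝ × ℝ)) (hfin : P.Finite) (hPU : P ⊆ unitSq)
    (n : ℕ) (hn : P.ncard = n) (hn1 : 1 ≤ n) :
    {σ : Set (ℝ × ℝ) | Critical P σ}.ncard ≤ n - 1 ∧ (QT P).ncard ≤ 4 * n :=
  QT_linear_size_general P hfin n hn hn1
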